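/- arXiv:1503.05838 — 4 statements merged into one kernel-verified Lean document; each statement's English description precedes it below -/
import Mathlib

section
/- There exists a constant κ > 0 such that for every ℓ ∈ ℕ and every function f: {1,...,ℓ} → ℝ with ∑_{x=1}^{ℓ} f(x) = 0, one has ∑_{x=1}^{ℓ} f(x)² ≤ κ ℓ^α ∑_{x,y ∈ {1,...,ℓ}} p(y-x) (f(y) - f(x))², where p(z) = c(z)/|z|^(1+α) with c(z) = c⁺ for z > 0, c(z) = c⁻ for z < 0, c(0) = 0. -/
/-!
Symmetrizing, the Dirichlet form equals `½ ∑ₓ ∑ᵧ (p(y-x) + p(x-y)) (f y - f x)²`, and for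
`x ≠ y` in `{1,…,ℓ}` the symmetrized kernel is `(c⁺ + c⁻) / |y-x|^(1+α) ≥ (c⁺ + c⁻) / ℓ^(1+α)`.
For mean-zero `f` the identity `∑ₓ ∑ᵧ (f y - f x)² = 2 ℓ ∑ₓ f(x)²` then gives the inequality
with `κ = 1 / (c⁺ + c⁻)`.
-/

open Finset

theorem Finset.sum_sum_sub_sq {ι R : Type*} [CommRing R] (s : Finset ι) (f : ι → R) :
    ∑ x ∈ s, ∑ y ∈ s, (f y - f x) ^ 2 = 2 * (#s * ∑ x ∈ s, f x ^ 2 - (∑ x ∈ s, f x) ^ 2) := by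
  simp only [sub_sq, sum_add_distrib, sum_sub_distrib, sum_const, nsmul_eq_mul, ← sum_mul,
    ← mul_sum, sq (∑ x ∈ s, f x)]
  ring

theorem Finset.mul_card_mul_sum_sq_le_of_le_add_swap {ι : Type*} (s : Finset ι)
    (K : ι → ι → ℝ) (m : ℝ)
    (hK : ∀ x ∈ s, ∀ y ∈ s, x ≠ y → m ≤ K x y + K y x) (f : ι → ℝ) (hf : ∑ x ∈ s, f x = 0) :
    m * #s * ∑ x ∈ s, f x ^ 2 ≤ ∑ x ∈ s, ∑ y ∈ s, K x y * (f y - f x) ^ 2 := by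
  have hsymm : 2 * ∑ x ∈ s, ∑ y ∈ s, K x y * (f y - f x) ^ 2
      = ∑ x ∈ s, ∑ y ∈ s, (K x y + K y x) * (f y - f x) ^ 2 := by
    rw [two_mul]
    nth_rewrite 2 [sum_comm]
    simp only [← sum_add_distrib]
    exact sum_congr rfl fun x _ => sum_congr rfl fun y _ => by ring
  have hbound : m * ∑ x ∈ s, ∑ y ∈ s, (f y - f x) ^ 2
      ≤ ∑ x ∈ s, ∑ y ∈ s, (K x y + K y x) * (f y - f x) ^ 2 := by
    simp only [mul_sum]
    refine sum_le_sum fun x hx => sum_le_sum fun y hy => ?_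
    obtain rfl | hxy := eq_or_ne x y
    · simp
    · exact mul_le_mul_of_nonneg_right (hK x hx y hy hxy) (sq_nonneg _)
  rw [sum_sum_sub_sq, hf] at hbound
  linarith

theorem abs_sub_le_of_mem_Icc {x y : ℤ} {ℓ : ℕ} (hx : x ∈ Icc (1 : ℤ) ℓ)
    (hy : y ∈ Icc (1 : ℤ) ℓ) :
    |((y - x : ℤ) : ℝ)| ≤ ℓ := by
  rw [mem_Icc] at hx hy
  exact_mod_cast abs_le.2 (by omega : -(ℓ : ℤ) ≤ y - x ∧ y - x ≤ ℓ)

section LongJumpKernel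

variable {α cp cm : ℝ} {p : ℤ → ℝ}

theorem add_neg_eq_of_long_jump_kernel
    (hp : ∀ z : ℤ, p z =
      if 0 < z then cp / |(z : ℝ)| ^ (1 + α)
      else if z < 0 then cm / |(z : ℝ)| ^ (1 + α)
      else 0)
    {z : ℤ} (hz : z ≠ 0) : p z + p (-z) = (cp + cm) / |(z : ℝ)| ^ (1 + α) := by
  rw [hp z, hp (-z), Int.cast_neg, abs_neg]
  rcases hz.lt_or_gt with hneg | hpos
  · rw [if_neg hneg.not_gt, if_pos hneg, if_pos (neg_pos.2 hneg), add_div, add_comm]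
  · rw [if_pos hpos, if_neg (neg_neg_iff_pos.2 hpos).not_gt, if_pos (neg_neg_iff_pos.2 hpos),
      add_div]

theorem div_rpow_le_add_neg_of_long_jump_kernel (hα : 0 ≤ 1 + α) (hc : 0 < cp + cm)
    (hp : ∀ z : ℤ, p z =
      if 0 < z then cp / |(z : ℝ)| ^ (1 + α)
      else if z < 0 then cm / |(z : ℝ)| ^ (1 + α)
      else 0)
    {z : ℤ} (hz : z ≠ 0) {L : ℝ} (hzL : |(z : ℝ)| ≤ L) :
    (cp + cm) / L ^ (1 + α) ≤ p z + p (-z) := by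
  have hz1 : (1 : ℝ) ≤ |(z : ℝ)| := by
    rw [← Int.cast_abs]
    exact_mod_cast Int.one_le_abs hz
  rw [add_neg_eq_of_long_jump_kernel hp hz]
  exact div_le_div_of_nonneg_left hc.le (by positivity) (Real.rpow_le_rpow (by positivity) hzL hα)

end LongJumpKernel

theorem stmt_1_general (α cp cm : ℝ) (hα0 : 0 < α)
    (hc : 0 < cp + cm)
    (p : ℤ → ℝ)
    (hp : ∀ z : ℤ, p z =
      if 0 < z then cp / |(z : ℝ)| ^ (1 + α)
      else if z < 0 then cm / |(z : ℝ)| ^ (1 + α)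
      else 0) :
    ∃ κ : ℝ, 0 < κ ∧ ∀ (ℓ : ℕ) (f : ℤ → ℝ),
      (∑ x ∈ Finset.Icc (1 : ℤ) ℓ, f x) = 0 →
      (∑ x ∈ Finset.Icc (1 : ℤ) ℓ, f x ^ 2) ≤
        κ * (ℓ : ℝ) ^ α *
          ∑ x ∈ Finset.Icc (1 : ℤ) ℓ, ∑ y ∈ Finset.Icc (1 : ℤ) ℓ,
            p (y - x) * (f y - f x) ^ 2 := by
  refine ⟨1 / (cp + cm), by positivity, fun ℓ f hf => ?_⟩
  rcases Nat.eq_zero_or_pos ℓ with rfl | hℓ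
  · simp
  have hℓpos : (0 : ℝ) < ℓ := by exact_mod_cast hℓ
  have hpoincare := mul_card_mul_sum_sq_le_of_le_add_swap (Icc (1 : ℤ) ℓ) (fun x y => p (y - x))
    ((cp + cm) / (ℓ : ℝ) ^ (1 + α)) (fun x hx y hy hxy => by
      rw [show x - y = -(y - x) by ring]
      exact div_rpow_le_add_neg_of_long_jump_kernel (by linarith) hc hp
        (sub_ne_zero.2 hxy.symm) (abs_sub_le_of_mem_Icc hx hy)) f hf
  have hweight : (cp + cm) / (ℓ : ℝ) ^ (1 + α) * #(Icc (1 : ℤ) ℓ) = (cp + cm) / (ℓ : ℝ) ^ α := by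
    rw [Int.card_Icc, add_sub_cancel_right, Int.toNat_natCast, Real.rpow_add hℓpos, Real.rpow_one]
    field_simp
  rw [hweight, div_mul_eq_mul_div, div_le_iff₀ (by positivity)] at hpoincare
  rw [one_div, mul_assoc, inv_mul_eq_div, le_div_iff₀ hc]
  linarith

theorem stmt_1 (α cp cm : ℝ) (hα0 : 0 < α) (hα2 : α < 2)
    (hcp : 0 ≤ cp) (hcm : 0 ≤ cm) (hc : 0 < cp + cm)
    (p : ℤ → ℝ)
    (hp : ∀ z : ℤ, p z =
      if 0 < z then cp / |(z : ℝ)| ^ (1 + α)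
      else if z < 0 then cm / |(z : ℝ)| ^ (1 + α)
      else 0) :
    ∃ κ : ℝ, 0 < κ ∧ ∀ (ℓ : ℕ) (f : ℤ → ℝ),
      (∑ x ∈ Finset.Icc (1 : ℤ) ℓ, f x) = 0 →
      (∑ x ∈ Finset.Icc (1 : ℤ) ℓ, f x ^ 2) ≤
        κ * (ℓ : ℝ) ^ α *
          ∑ x ∈ Finset.Icc (1 : ℤ) ℓ, ∑ y ∈ Finset.Icc (1 : ℤ) ℓ,
            p (y - x) * (f y - f x) ^ 2 :=
  stmt_1_general α cp cm hα0 hc p hp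
end

section
/- Let ρ ∈ (0,1), ℓ ≥ 2, and η(0),...,η(ℓ-1) i.i.d. Bernoulli(ρ), with η̄(i) = η(i) - ρ and η^ℓ = (1/ℓ)∑_{i=0}^{ℓ-1} η(i). Define ψ^ℓ = (ℓ/(ℓ-1))((η^ℓ - ρ)² - ρ(1-ρ)/ℓ) + ((2ρ-1)/(ℓ-1))(η^ℓ - ρ). Then there is a constant c(ρ) depending only on ρ such that E[(ψ^ℓ)²] ≤ c(ρ)/ℓ². -/
/-!
Write `η^ℓ - ρ = S / ℓ`, where `S = ∑ (η i - ρ)` is a sum of `ℓ` independent centred random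
variables bounded by `1`. Expanding `(X + Y) ^ n` binomially for independent `X`, `Y` and inducting
on the number of summands gives `E[S²] ≤ ℓ` and `E[S⁴] ≤ 3ℓ²`: the mixed moments containing a
first moment vanish. With `D = η^ℓ - ρ` we have `ψ^ℓ = a (D² - w) + b D` for `a = ℓ/(ℓ-1) ≤ 2`,
`b = (2ρ-1)/(ℓ-1) = O(1/ℓ)` and `w = ρ(1-ρ)/ℓ`, so `(ψ^ℓ)² ≤ 4a²D⁴ + 2b²D² + 4a²w²`, whose
expectation is `O(1/ℓ²)` uniformly in `ρ`.
-/

open MeasureTheory ProbabilityTheory Finset unitInterval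

namespace ProbabilityTheory

variable {Ω ι : Type*} [MeasurableSpace Ω] {μ : Measure Ω}

lemma integrable_pow_of_ae_abs_le [IsFiniteMeasure μ] {f : Ω → ℝ} {C : ℝ}
    (hf : AEStronglyMeasurable f μ) (h : ∀ᵐ ω ∂μ, |f ω| ≤ C) (k : ℕ) :
    Integrable (fun ω => f ω ^ k) μ :=
  .of_bound (hf.pow k) (C ^ k) <| by
    filter_upwards [h] with ω hω
    rw [Real.norm_eq_abs, abs_pow]
    exact pow_le_pow_left₀ (abs_nonneg _) hω k

lemma integral_pow_le_of_ae_abs_le [IsProbabilityMeasure μ] {f : Ω → ℝ} {C : ℝ}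
    (h : ∀ᵐ ω ∂μ, |f ω| ≤ C) (k : ℕ) : ∫ ω, f ω ^ k ∂μ ≤ C ^ k := by
  have hbound : ∀ᵐ ω ∂μ, ‖f ω ^ k‖ ≤ C ^ k := by
    filter_upwards [h] with ω hω
    rw [Real.norm_eq_abs, abs_pow]
    exact pow_le_pow_left₀ (abs_nonneg _) hω k
  simpa using (le_abs_self _).trans (norm_integral_le_of_norm_le_const hbound)

lemma IndepFun.integral_add_pow {X Y : Ω → ℝ} (hXY : IndepFun X Y μ)
    (hX : ∀ k : ℕ, Integrable (fun ω => X ω ^ k) μ)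
    (hY : ∀ k : ℕ, Integrable (fun ω => Y ω ^ k) μ) (n : ℕ) :
    ∫ ω, (X ω + Y ω) ^ n ∂μ =
      ∑ k ∈ range (n + 1), (∫ ω, X ω ^ k ∂μ) * (∫ ω, Y ω ^ (n - k) ∂μ) * n.choose k := by
  have hpow (k m : ℕ) : IndepFun (fun ω => X ω ^ k) (fun ω => Y ω ^ m) μ :=
    hXY.comp (measurable_id.pow_const k) (measurable_id.pow_const m)
  have hterm (k : ℕ) : Integrable (fun ω => X ω ^ k * Y ω ^ (n - k) * n.choose k) μ :=
    ((hpow k (n - k)).integrable_mul (hX k) (hY _)).mul_const _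
  simp_rw [add_pow]
  rw [integral_finsetSum _ fun k _ => hterm k]
  refine sum_congr rfl fun k _ => ?_
  rw [integral_mul_const]
  congr 1
  exact (hpow k (n - k)).integral_mul_eq_mul_integral (hX k).1 (hY _).1

section SumsOfBoundedCentred

variable {X : ι → Ω → ℝ}

lemma ae_abs_sum_le_card (hX : ∀ i, ∀ᵐ ω ∂μ, |X i ω| ≤ 1) (s : Finset ι) :
    ∀ᵐ ω ∂μ, |∑ i ∈ s, X i ω| ≤ #s := by
  filter_upwards [(s.eventually_all).2 fun i _ => hX i] with ω hω
  calc |∑ i ∈ s, X i ω| ≤ ∑ i ∈ s, |X i ω| := abs_sum_le_sum_abs _ _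
    _ ≤ ∑ _i ∈ s, (1 : ℝ) := sum_le_sum hω
    _ = #s := by simp

lemma integrable_sum_pow [IsFiniteMeasure μ] (hmeas : ∀ i, Measurable (X i))
    (hX : ∀ i, ∀ᵐ ω ∂μ, |X i ω| ≤ 1) (s : Finset ι) (k : ℕ) :
    Integrable (fun ω => (∑ i ∈ s, X i ω) ^ k) μ :=
  integrable_pow_of_ae_abs_le (Finset.measurable_sum s fun i _ => hmeas i).aestronglyMeasurable
    (ae_abs_sum_le_card hX s) k

variable [IsProbabilityMeasure μ] (hmeas : ∀ i, Measurable (X i))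
  (hX : ∀ i, ∀ᵐ ω ∂μ, |X i ω| ≤ 1) (hmean : ∀ i, ∫ ω, X i ω ∂μ = 0) (hindep : iIndepFun X μ)
include hmeas hX

include hmean in
lemma integral_sum_eq_zero (s : Finset ι) : ∫ ω, ∑ i ∈ s, X i ω ∂μ = 0 := by
  rw [integral_finsetSum _ fun i _ => .of_bound (hmeas i).aestronglyMeasurable 1 (hX i)]
  simp [hmean]

include hindep

lemma integral_sum_cons_pow {i : ι} {s : Finset ι} (hi : i ∉ s) (n : ℕ) :
    ∫ ω, (∑ j ∈ cons i s hi, X j ω) ^ n ∂μ =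
      ∑ k ∈ range (n + 1),
        (∫ ω, X i ω ^ k ∂μ) * (∫ ω, (∑ j ∈ s, X j ω) ^ (n - k) ∂μ) * n.choose k := by
  have hind : IndepFun (X i) (fun ω => ∑ j ∈ s, X j ω) μ := by
    simpa only [Finset.sum_fn] using (hindep.indepFun_finsetSum_of_notMem hmeas hi).symm
  simp_rw [sum_cons]
  exact hind.integral_add_pow (integrable_pow_of_ae_abs_le (hmeas i).aestronglyMeasurable (hX i))
    (integrable_sum_pow hmeas hX s) n

include hmean

lemma integral_sum_sq_le (s : Finset ι) : ∫ ω, (∑ i ∈ s, X i ω) ^ 2 ∂μ ≤ #s := by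
  induction s using Finset.cons_induction with
  | empty => simp
  | cons i s hi ih =>
    have hexp : ∫ ω, (∑ j ∈ cons i s hi, X j ω) ^ 2 ∂μ =
        ∫ ω, (∑ j ∈ s, X j ω) ^ 2 ∂μ + ∫ ω, X i ω ^ 2 ∂μ := by
      rw [integral_sum_cons_pow hmeas hX hindep hi]
      simp [sum_range_succ, hmean]
    have hX₂ : ∫ ω, X i ω ^ 2 ∂μ ≤ 1 := by simpa using integral_pow_le_of_ae_abs_le (hX i) 2
    rw [hexp, card_cons, Nat.cast_add, Nat.cast_one]
    linarith

lemma integral_sum_pow_four_le (s : Finset ι) :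
    ∫ ω, (∑ i ∈ s, X i ω) ^ 4 ∂μ ≤ 3 * #s ^ 2 := by
  induction s using Finset.cons_induction with
  | empty => simp
  | cons i s hi ih =>
    have hexp : ∫ ω, (∑ j ∈ cons i s hi, X j ω) ^ 4 ∂μ =
        ∫ ω, (∑ j ∈ s, X j ω) ^ 4 ∂μ +
          6 * ((∫ ω, X i ω ^ 2 ∂μ) * ∫ ω, (∑ j ∈ s, X j ω) ^ 2 ∂μ) + ∫ ω, X i ω ^ 4 ∂μ := by
      rw [integral_sum_cons_pow hmeas hX hindep hi]
      norm_num [sum_range_succ, hmean, integral_sum_eq_zero hmeas hX hmean s, Nat.choose]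
      ring
    have hX₂ : ∫ ω, X i ω ^ 2 ∂μ ≤ 1 := by simpa using integral_pow_le_of_ae_abs_le (hX i) 2
    have hX₄ : ∫ ω, X i ω ^ 4 ∂μ ≤ 1 := by simpa using integral_pow_le_of_ae_abs_le (hX i) 4
    have hprod : (∫ ω, X i ω ^ 2 ∂μ) * (∫ ω, (∑ j ∈ s, X j ω) ^ 2 ∂μ) ≤ 1 * #s :=
      mul_le_mul hX₂ (integral_sum_sq_le hmeas hX hmean hindep s)
        (integral_nonneg fun _ => sq_nonneg _) zero_le_one
    rw [hexp, card_cons, Nat.cast_add, Nat.cast_one]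
    nlinarith

omit hmean hindep in
lemma integrable_mean_pow [Fintype ι] (k : ℕ) :
    Integrable (fun ω => ((∑ i, X i ω) / Fintype.card ι) ^ k) μ := by
  simp_rw [div_pow]
  exact (integrable_sum_pow hmeas hX univ k).div_const _

lemma integral_mean_sq_le [Fintype ι] :
    ∫ ω, ((∑ i, X i ω) / Fintype.card ι) ^ 2 ∂μ ≤ 1 / Fintype.card ι := by
  have hS₂ := integral_sum_sq_le hmeas hX hmean hindep univ
  simp_rw [div_pow]
  rw [integral_div, card_univ] at *
  calc _ ≤ (Fintype.card ι : ℝ) / (Fintype.card ι) ^ 2 := by gcongr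
    _ = 1 / Fintype.card ι := by rw [sq, div_self_mul_self', one_div]

lemma integral_mean_pow_four_le [Fintype ι] :
    ∫ ω, ((∑ i, X i ω) / Fintype.card ι) ^ 4 ∂μ ≤ 3 / (Fintype.card ι) ^ 2 := by
  have hS₄ := integral_sum_pow_four_le hmeas hX hmean hindep univ
  simp_rw [div_pow]
  rw [integral_div, card_univ] at *
  calc _ ≤ 3 * (Fintype.card ι : ℝ) ^ 2 / (Fintype.card ι) ^ 4 := by gcongr
    _ = 3 / (Fintype.card ι) ^ 2 := by
        rw [mul_div_assoc, show 4 = 2 + 2 from rfl, pow_add, div_self_mul_self', div_eq_mul_inv]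

end SumsOfBoundedCentred

lemma ofReal_smul_dirac_add_eq_bernoulliMeasure {X : Type*} [MeasurableSpace X] (x y : X)
    {p : ℝ} (hp : p ∈ I) :
    ENNReal.ofReal p • Measure.dirac x + ENNReal.ofReal (1 - p) • Measure.dirac y =
      Ber(x, y, ⟨p, hp⟩) := by
  have h₁ : p.toNNReal = toNNReal ⟨p, hp⟩ := by ext; simp [hp.1]
  have h₂ : (1 - p).toNNReal = toNNReal (σ ⟨p, hp⟩) := by ext; simp [hp.2]
  rw [bernoulliMeasure_def, ENNReal.ofReal, ENNReal.ofReal, h₁, h₂]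
  rfl

section BernoulliLaw

variable {η : Ω → ℝ} {p : I} (hη : Measurable η) (hlaw : μ.map η = Ber(1, 0, p))
include hη hlaw

lemma integrable_of_map_eq_bernoulliMeasure : Integrable η μ :=
  (integrable_map_measure aestronglyMeasurable_id hη.aemeasurable).1
    (hlaw ▸ integrable_bernoulliMeasure 1 0 p id)

lemma integral_eq_of_map_eq_bernoulliMeasure : ∫ ω, η ω ∂μ = p := by
  change ∫ ω, id (η ω) ∂μ = p
  rw [← integral_map hη.aemeasurable aestronglyMeasurable_id, hlaw, integral_bernoulliMeasure]
  simp

lemma integral_sub_eq_zero_of_map_eq_bernoulliMeasure [IsProbabilityMeasure μ] :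
    ∫ ω, η ω - p ∂μ = 0 := by
  rw [integral_sub (integrable_of_map_eq_bernoulliMeasure hη hlaw) (integrable_const _),
    integral_eq_of_map_eq_bernoulliMeasure hη hlaw]
  simp

lemma ae_abs_sub_le_one_of_map_eq_bernoulliMeasure : ∀ᵐ ω ∂μ, |η ω - (p : ℝ)| ≤ 1 := by
  have : ∀ᵐ x ∂(μ.map η), |x - (p : ℝ)| ≤ 1 := by
    rw [hlaw, bernoulliMeasure_def, ae_add_measure_iff]
    refine ⟨Measure.ae_smul_measure ?_ _, Measure.ae_smul_measure ?_ _⟩ <;>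
      rw [ae_dirac_eq, Filter.eventually_pure, abs_le] <;> constructor <;>
      linarith [p.2.1, p.2.2]
  exact ae_of_ae_map hη.aemeasurable this

end BernoulliLaw

end ProbabilityTheory

lemma sq_quadratic_le (a b w t : ℝ) :
    (a * (t ^ 2 - w) + b * t) ^ 2 ≤ 4 * a ^ 2 * t ^ 4 + 2 * b ^ 2 * t ^ 2 + 4 * a ^ 2 * w ^ 2 := by
  nlinarith [sq_nonneg (a * (t ^ 2 - w) - b * t), sq_nonneg (a * (t ^ 2 + w))]

lemma integral_sq_quadratic_le {Ω : Type*} [MeasurableSpace Ω] {μ : Measure Ω}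
    [IsProbabilityMeasure μ] {D : Ω → ℝ} (h₂ : Integrable (fun ω => D ω ^ 2) μ)
    (h₄ : Integrable (fun ω => D ω ^ 4) μ) (a b w : ℝ) :
    ∫ ω, (a * (D ω ^ 2 - w) + b * D ω) ^ 2 ∂μ ≤
      4 * a ^ 2 * ∫ ω, D ω ^ 4 ∂μ + 2 * b ^ 2 * ∫ ω, D ω ^ 2 ∂μ + 4 * a ^ 2 * w ^ 2 := by
  have hint : Integrable (fun ω => 4 * a ^ 2 * D ω ^ 4 + 2 * b ^ 2 * D ω ^ 2) μ :=
    (h₄.const_mul _).add (h₂.const_mul _)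
  calc ∫ ω, (a * (D ω ^ 2 - w) + b * D ω) ^ 2 ∂μ
      ≤ ∫ ω, 4 * a ^ 2 * D ω ^ 4 + 2 * b ^ 2 * D ω ^ 2 + 4 * a ^ 2 * w ^ 2 ∂μ :=
        integral_mono_of_nonneg (.of_forall fun _ => sq_nonneg _)
          (hint.add (integrable_const _)) (.of_forall fun ω => sq_quadratic_le a b w (D ω))
    _ = _ := by
        rw [integral_add hint (integrable_const _), integral_add (h₄.const_mul _) (h₂.const_mul _),
          integral_const_mul, integral_const_mul]
        simp

lemma psi_bound_of_moments {L ρ m₂ m₄ : ℝ} (hL : 2 ≤ L) (hρ0 : 0 ≤ ρ) (hρ1 : ρ ≤ 1)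
    (hm₂0 : 0 ≤ m₂) (hm₂ : m₂ ≤ 1 / L) (hm₄0 : 0 ≤ m₄) (hm₄ : m₄ ≤ 3 / L ^ 2) :
    4 * (L / (L - 1)) ^ 2 * m₄ + 2 * ((2 * ρ - 1) / (L - 1)) ^ 2 * m₂ +
      4 * (L / (L - 1)) ^ 2 * (ρ * (1 - ρ) / L) ^ 2 ≤ 100 / L ^ 2 := by
  have ha : (L / (L - 1)) ^ 2 ≤ 4 := by
    rw [div_pow, div_le_iff₀ (by nlinarith)]
    nlinarith
  have hb : ((2 * ρ - 1) / (L - 1)) ^ 2 ≤ 4 / L ^ 2 := by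
    rw [div_pow, div_le_div_iff₀ (by nlinarith) (by positivity)]
    have h₁ : (2 * ρ - 1) ^ 2 ≤ 1 := by nlinarith
    have h₂ : L ^ 2 ≤ (2 * (L - 1)) ^ 2 := by nlinarith
    nlinarith [mul_le_mul h₁ h₂ (sq_nonneg L) zero_le_one]
  have hw : (ρ * (1 - ρ) / L) ^ 2 ≤ 1 / L ^ 2 := by
    rw [div_pow]
    gcongr
    exact pow_le_one₀ (by nlinarith) (by nlinarith)
  calc _ ≤ 4 * 4 * (3 / L ^ 2) + 2 * (4 / L ^ 2) * (1 / L) + 4 * 4 * (1 / L ^ 2) := by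
        gcongr
    _ = (64 + 8 / L) / L ^ 2 := by field_simp; ring
    _ ≤ 100 / L ^ 2 := by
        gcongr
        linarith [div_le_div_of_nonneg_left (by norm_num : (0 : ℝ) ≤ 8) (by norm_num) hL]

theorem stmt_9 (ρ : ℝ) (hρ0 : 0 < ρ) (hρ1 : ρ < 1) :
    ∃ c : ℝ, 0 < c ∧
      ∀ (ℓ : ℕ), 2 ≤ ℓ →
        ∀ (Ω : Type) (_ : MeasurableSpace Ω) (μ : Measure Ω),
          IsProbabilityMeasure μ →
          ∀ (η : Fin ℓ → Ω → ℝ),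
            (∀ i, Measurable (η i)) →
            (∀ i, Measure.map (η i) μ =
              ENNReal.ofReal ρ • Measure.dirac (1 : ℝ) +
                ENNReal.ofReal (1 - ρ) • Measure.dirac (0 : ℝ)) →
            iIndepFun η μ →
            (∫ ω, ((ℓ / (ℓ - 1) : ℝ) *
                (((∑ i, η i ω) / ℓ - ρ) ^ 2 - ρ * (1 - ρ) / ℓ) +
              ((2 * ρ - 1) / (ℓ - 1)) * ((∑ i, η i ω) / ℓ - ρ)) ^ 2 ∂μ)
              ≤ c / (ℓ : ℝ) ^ 2 := by
  refine ⟨100, by norm_num, fun ℓ hℓ Ω _ μ _ η hmeas hlaw hindep => ?_⟩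
  have hρ : ρ ∈ I := ⟨hρ0.le, hρ1.le⟩
  have hL : (2 : ℝ) ≤ ℓ := by exact_mod_cast hℓ
  have hber (i : Fin ℓ) : μ.map (η i) = Ber(1, 0, ⟨ρ, hρ⟩) := by
    rw [hlaw i, ofReal_smul_dirac_add_eq_bernoulliMeasure]
  set X : Fin ℓ → Ω → ℝ := fun i ω => η i ω - ρ
  have hXmeas (i : Fin ℓ) : Measurable (X i) := (hmeas i).sub_const ρ
  have hXindep : iIndepFun X μ := hindep.comp _ fun _ => measurable_id.sub_const ρ
  have hXbound (i : Fin ℓ) : ∀ᵐ ω ∂μ, |X i ω| ≤ 1 :=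
    ae_abs_sub_le_one_of_map_eq_bernoulliMeasure (hmeas i) (hber i)
  have hXmean (i : Fin ℓ) : ∫ ω, X i ω ∂μ = 0 :=
    integral_sub_eq_zero_of_map_eq_bernoulliMeasure (hmeas i) (hber i)
  have hdev (ω : Ω) : (∑ i, η i ω) / ℓ - ρ = (∑ i, X i ω) / ℓ := by
    simp only [X, sum_sub_distrib, sum_const, card_univ, Fintype.card_fin, nsmul_eq_mul]
    field_simp
  have hint := integrable_mean_pow hXmeas hXbound
  have h₂ := integral_mean_sq_le hXmeas hXbound hXmean hXindep
  have h₄ := integral_mean_pow_four_le hXmeas hXbound hXmean hXindep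
  rw [Fintype.card_fin] at hint h₂ h₄
  simp_rw [hdev]
  exact (integral_sq_quadratic_le (hint 2) (hint 4) _ _ _).trans
    (psi_bound_of_moments hL hρ.1 hρ.2 (integral_nonneg fun _ => by positivity) h₂
      (integral_nonneg fun _ => by positivity) h₄)
end

section
/- Let ρ ∈ (0,1), ℓ ≥ 2, η(0),...,η(ℓ-1) i.i.d. Bernoulli(ρ), η^ℓ the empirical mean, and ψ^ℓ as above. Then there is a constant c(ρ) such that E[(ψ^ℓ - (η^ℓ - ρ)² + ρ(1-ρ)/ℓ)²] ≤ c(ρ)/ℓ³. -/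
/-!
Writing `X = η^ℓ - ρ`, `v = ρ(1-ρ)/ℓ` and `b = 2ρ - 1`, the integrand is exactly
`(X² - v + bX)² / (ℓ-1)²`. Since `|X| ≤ 1` and `|b| ≤ 1`, the numerator is at most
`6X² + 3v²`, and `E[X²] = v` is the variance of the empirical mean, so, as `v ≤ 1`,
the expectation is at most `9v / (ℓ-1)² ≤ 36 / ℓ³`.
-/

open MeasureTheory ProbabilityTheory unitInterval

lemma ofReal_smul_dirac_add_eq_bernoulliMeasure {X : Type*} [MeasurableSpace X] (x y : X)
    (p : I) :
    ENNReal.ofReal p • Measure.dirac x + ENNReal.ofReal (1 - p) • Measure.dirac y =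
      Ber(x, y, p) := by
  have h (q : I) : ENNReal.ofReal q = (toNNReal q : ENNReal) :=
    ENNReal.ofReal_eq_coe_nnreal q.2.1
  rw [bernoulliMeasure_def, ← coe_symm_eq, h, h]
  rfl

lemma ae_eq_or_eq_bernoulliMeasure {X : Type*} [MeasurableSpace X] [MeasurableSingletonClass X]
    (x y : X) (p : I) : ∀ᵐ z ∂Ber(x, y, p), z = x ∨ z = y := by
  have hs : MeasurableSet ({x, y} : Set X)ᶜ := (Set.toFinite _).measurableSet.compl
  rw [ae_iff]
  convert bernoulliMeasure_apply_of_notMem_of_notMem (x := x) (y := y) p hs (by simp) (by simp)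
    using 2
  ext
  simp

section Bernoulli

variable {Ω : Type*} [MeasurableSpace Ω] {μ : Measure Ω} {X : Ω → ℝ} {p : I}

lemma ae_mem_Icc_of_map_eq_bernoulliMeasure (hX : Measurable X) (h : μ.map X = Ber(1, 0, p)) :
    ∀ᵐ ω ∂μ, X ω ∈ Set.Icc (0 : ℝ) 1 := by
  have hae := ae_of_ae_map hX.aemeasurable (h ▸ ae_eq_or_eq_bernoulliMeasure (1 : ℝ) 0 p)
  filter_upwards [hae] with ω hω
  rcases hω with hω | hω <;> simp [hω]

lemma integral_comp_of_map_eq_bernoulliMeasure (hX : Measurable X)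
    (h : μ.map X = Ber(1, 0, p)) {f : ℝ → ℝ} (hf : Measurable f) :
    ∫ ω, f (X ω) ∂μ = p * f 1 + (1 - p) * f 0 := by
  rw [← integral_map hX.aemeasurable hf.aestronglyMeasurable, h, integral_bernoulliMeasure]
  rfl

lemma memLp_of_map_eq_bernoulliMeasure [IsFiniteMeasure μ] (hX : Measurable X)
    (h : μ.map X = Ber(1, 0, p)) (q : ENNReal) : MemLp X q μ := by
  refine MemLp.of_bound hX.aestronglyMeasurable 1 ?_
  filter_upwards [ae_mem_Icc_of_map_eq_bernoulliMeasure hX h] with ω hω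
  rw [Real.norm_eq_abs, abs_of_nonneg hω.1]
  exact hω.2

lemma variance_of_map_eq_bernoulliMeasure [IsProbabilityMeasure μ] (hX : Measurable X)
    (h : μ.map X = Ber(1, 0, p)) : variance X μ = p * (1 - p) := by
  rw [variance_eq_sub (memLp_of_map_eq_bernoulliMeasure hX h 2)]
  have h₁ := integral_comp_of_map_eq_bernoulliMeasure hX h measurable_id
  have h₂ := integral_comp_of_map_eq_bernoulliMeasure hX h (measurable_id.pow_const 2)
  simp only [id, Pi.pow_apply] at h₁ h₂ ⊢
  rw [h₁, h₂]
  ring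

end Bernoulli

section EmpiricalMean

variable {Ω ι : Type*} [MeasurableSpace Ω] {μ : Measure Ω} [Fintype ι]

lemma abs_sum_div_card_sub_le_one {y : ι → ℝ} (hy : ∀ i, y i ∈ Set.Icc (0 : ℝ) 1)
    {ρ : ℝ} (hρ : ρ ∈ Set.Icc (0 : ℝ) 1) : |(∑ i, y i) / Fintype.card ι - ρ| ≤ 1 := by
  have hsum : ∑ i, y i ≤ Fintype.card ι := by
    simpa using Finset.sum_le_sum fun i (_ : i ∈ Finset.univ) => (hy i).2
  refine abs_sub_le_of_nonneg_of_le ?_ (div_le_one_of_le₀ hsum (by positivity)) hρ.1 hρ.2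
  exact div_nonneg (Finset.sum_nonneg fun i _ => (hy i).1) (by positivity)

lemma integral_sq_sum_div_card_sub_eq [IsFiniteMeasure μ] [Nonempty ι] {X : ι → Ω → ℝ}
    (hX : ∀ i, MemLp (X i) 2 μ) (hind : Pairwise fun i j => IndepFun (X i) (X j) μ)
    {m σ2 : ℝ} (hmean : ∀ i, ∫ ω, X i ω ∂μ = m) (hvar : ∀ i, variance (X i) μ = σ2) :
    ∫ ω, ((∑ i, X i ω) / Fintype.card ι - m) ^ 2 ∂μ = σ2 / Fintype.card ι := by
  set n : ℝ := (Fintype.card ι : ℝ)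
  have hn : n ≠ 0 := by positivity
  have hint : ∫ ω, (∑ i, X i) ω ∂μ = n * m := by
    simp only [Finset.sum_apply]
    rw [integral_finsetSum _ fun i _ => (hX i).integrable one_le_two]
    simp [hmean, n]
  have hvarS : variance (∑ i, X i) μ = n * σ2 := by
    rw [IndepFun.variance_sum (fun i _ => hX i) fun i _ j _ hij => hind hij]
    simp [hvar, n]
  have hS : AEMeasurable (∑ i, X i) μ :=
    (memLp_finsetSum' _ fun i _ => hX i).aestronglyMeasurable.aemeasurable
  rw [variance_eq_integral hS, hint] at hvarS
  calc ∫ ω, ((∑ i, X i ω) / n - m) ^ 2 ∂μ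
      = (∫ ω, ((∑ i, X i) ω - n * m) ^ 2 ∂μ) / n ^ 2 := by
        rw [← integral_div]
        congr with ω
        simp only [Finset.sum_apply]
        field_simp
    _ = σ2 / n := by
        rw [hvarS]
        field_simp

end EmpiricalMean

lemma sq_sq_sub_add_mul_le {x b : ℝ} (v : ℝ) (hx : |x| ≤ 1) (hb : |b| ≤ 1) :
    (x ^ 2 - v + b * x) ^ 2 ≤ 6 * x ^ 2 + 3 * v ^ 2 := by
  have hx2 : x ^ 2 ≤ 1 := by nlinarith [abs_nonneg x, sq_abs x]
  have hb2 : b ^ 2 ≤ 1 := by nlinarith [abs_nonneg b, sq_abs b]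
  nlinarith [sq_nonneg (x ^ 2 + v), sq_nonneg (x ^ 2 - b * x), sq_nonneg (v + b * x),
    mul_nonneg (sub_nonneg.2 hx2) (sq_nonneg x), mul_nonneg (sub_nonneg.2 hb2) (sq_nonneg x)]

lemma integral_sq_sq_sub_add_mul_le {Ω : Type*} [MeasurableSpace Ω] {μ : Measure Ω}
    [IsProbabilityMeasure μ] {X : Ω → ℝ} (hXm : AEStronglyMeasurable X μ)
    (hX : ∀ᵐ ω ∂μ, |X ω| ≤ 1) {b : ℝ} (hb : |b| ≤ 1) :
    ∫ ω, (X ω ^ 2 - ∫ ω', X ω' ^ 2 ∂μ + b * X ω) ^ 2 ∂μ ≤ 9 * ∫ ω, X ω ^ 2 ∂μ := by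
  set v := ∫ ω, X ω ^ 2 ∂μ
  have hX2 : ∀ᵐ ω ∂μ, ‖X ω ^ 2‖ ≤ 1 := by
    filter_upwards [hX] with ω hω
    rw [norm_pow, Real.norm_eq_abs]
    exact pow_le_one₀ (abs_nonneg _) hω
  have hX2i : Integrable (fun ω => X ω ^ 2) μ := Integrable.of_bound (hXm.pow 2) 1 hX2
  have hv0 : 0 ≤ v := integral_nonneg fun ω => sq_nonneg (X ω)
  have hv1 : v ≤ 1 := by
    simpa using integral_mono_ae hX2i (integrable_const (1 : ℝ))
      (hX2.mono fun ω hω => (le_abs_self _).trans hω)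
  have hbound : ∀ᵐ ω ∂μ, (X ω ^ 2 - v + b * X ω) ^ 2 ≤ 6 * X ω ^ 2 + 3 * v ^ 2 :=
    hX.mono fun ω hω => sq_sq_sub_add_mul_le v hω hb
  have hgi : Integrable (fun ω => 6 * X ω ^ 2 + 3 * v ^ 2) μ :=
    (hX2i.const_mul 6).add (integrable_const _)
  have hfi : Integrable (fun ω => (X ω ^ 2 - v + b * X ω) ^ 2) μ := by
    refine hgi.mono' ((((hXm.pow 2).sub aestronglyMeasurable_const).add
      (aestronglyMeasurable_const.mul hXm)).pow 2) ?_
    filter_upwards [hbound] with ω hω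
    rwa [Real.norm_eq_abs, abs_of_nonneg (sq_nonneg _)]
  calc ∫ ω, (X ω ^ 2 - v + b * X ω) ^ 2 ∂μ
      ≤ ∫ ω, 6 * X ω ^ 2 + 3 * v ^ 2 ∂μ := integral_mono_ae hfi hgi hbound
    _ = 6 * v + 3 * v ^ 2 := by
        rw [integral_add (hX2i.const_mul 6) (integrable_const _), integral_const_mul]
        simp [v]
    _ ≤ 9 * v := by nlinarith

lemma div_sub_one_mul_add_div_sub_one_mul {L : ℝ} (hL : L ≠ 1) (x v b : ℝ) :
    L / (L - 1) * (x ^ 2 - v) + b / (L - 1) * x - x ^ 2 + v =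
      (x ^ 2 - v + b * x) / (L - 1) := by
  have : L - 1 ≠ 0 := sub_ne_zero.2 hL
  field_simp
  ring

lemma one_div_sub_one_sq_le {L : ℝ} (hL : 2 ≤ L) : 1 / (L - 1) ^ 2 ≤ 4 / L ^ 2 := by
  rw [div_le_div_iff₀ (by nlinarith) (by positivity)]
  nlinarith

theorem stmt_10 (ρ : ℝ) (hρ0 : 0 < ρ) (hρ1 : ρ < 1) :
    ∃ c : ℝ, 0 < c ∧
      ∀ (ℓ : ℕ), 2 ≤ ℓ →
        ∀ (Ω : Type) (_ : MeasurableSpace Ω) (μ : Measure Ω),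
          IsProbabilityMeasure μ →
          ∀ (η : Fin ℓ → Ω → ℝ),
            (∀ i, Measurable (η i)) →
            (∀ i, Measure.map (η i) μ =
              ENNReal.ofReal ρ • Measure.dirac (1 : ℝ) +
                ENNReal.ofReal (1 - ρ) • Measure.dirac (0 : ℝ)) →
            iIndepFun η μ →
            (∫ ω, (((ℓ / (ℓ - 1) : ℝ) *
                (((∑ i, η i ω) / ℓ - ρ) ^ 2 - ρ * (1 - ρ) / ℓ) +
                ((2 * ρ - 1) / (ℓ - 1)) * ((∑ i, η i ω) / ℓ - ρ))
                - ((∑ i, η i ω) / ℓ - ρ) ^ 2 + ρ * (1 - ρ) / ℓ) ^ 2 ∂μ)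
              ≤ c / (ℓ : ℝ) ^ 3 := by
  refine ⟨36, by norm_num, fun ℓ hℓ Ω _ μ _ η hη hmap hind => ?_⟩
  have hL : (2 : ℝ) ≤ ℓ := by exact_mod_cast hℓ
  have : Nonempty (Fin ℓ) := ⟨⟨0, by omega⟩⟩
  set p : I := ⟨ρ, hρ0.le, hρ1.le⟩
  have hBer (i : Fin ℓ) : μ.map (η i) = Ber(1, 0, p) :=
    (hmap i).trans (ofReal_smul_dirac_add_eq_bernoulliMeasure 1 0 p)
  set X : Ω → ℝ := fun ω => (∑ i, η i ω) / ℓ - ρ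
  have hXm : Measurable X :=
    ((Finset.measurable_sum _ fun i _ => hη i).div_const _).sub_const _
  have hX1 : ∀ᵐ ω ∂μ, |X ω| ≤ 1 := by
    filter_upwards [ae_all_iff.2 fun i => ae_mem_Icc_of_map_eq_bernoulliMeasure (hη i) (hBer i)]
      with ω hω
    simpa using abs_sum_div_card_sub_le_one hω ⟨hρ0.le, hρ1.le⟩
  have hmean (i : Fin ℓ) : ∫ ω, η i ω ∂μ = ρ := by
    simpa using integral_comp_of_map_eq_bernoulliMeasure (hη i) (hBer i) measurable_id
  have hXv : ∫ ω, X ω ^ 2 ∂μ = ρ * (1 - ρ) / ℓ := by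
    simpa using integral_sq_sum_div_card_sub_eq
      (fun i => memLp_of_map_eq_bernoulliMeasure (hη i) (hBer i) 2)
      (fun i j hij => hind.indepFun hij) hmean
      (fun i => variance_of_map_eq_bernoulliMeasure (hη i) (hBer i))
  have hb : |2 * ρ - 1| ≤ 1 := abs_le.2 ⟨by linarith, by linarith⟩
  calc _ = (∫ ω, (X ω ^ 2 - ∫ ω', X ω' ^ 2 ∂μ + (2 * ρ - 1) * X ω) ^ 2 ∂μ) /
        ((ℓ : ℝ) - 1) ^ 2 := by
        rw [← integral_div, hXv]
        congr with ω
        rw [div_sub_one_mul_add_div_sub_one_mul (by linarith), div_pow]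
    _ ≤ 9 * (ρ * (1 - ρ) / ℓ) * (1 / ((ℓ : ℝ) - 1) ^ 2) := by
        rw [← hXv, ← div_eq_mul_one_div]
        gcongr
        exact integral_sq_sq_sub_add_mul_le hXm.aestronglyMeasurable hX1 hb
    _ ≤ 9 * (1 / (ℓ : ℝ)) * (4 / (ℓ : ℝ) ^ 2) := by
        refine mul_le_mul ?_ (one_div_sub_one_sq_le hL) (by positivity) (by positivity)
        gcongr
        nlinarith
    _ = 36 / ℓ ^ 3 := by ring
end

section
/- Let 1/2 < α ≤ 1 and let f be a Schwartz function on ℝ. Then the quantity n^(2α-1) ∑_{x,y ∈ ℤ, x≠y} |y-x|^(-(2+2α)) (f(y/n) - f(x/n))² is bounded uniformly in n when α = 1, and converges to 0 as n → ∞ when α < 1. -/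
/-!
Write `u x = f (x / n)`. Telescoping and Cauchy–Schwarz give
`∑ₓ (u (x + z) - u x)² ≤ z² ∑ₓ (u (x + 1) - u x)²`, so the double sum is at most
`(∑_{z ≠ 0} |z| ^ (-2α)) · ∑ₓ (u (x + 1) - u x)²`, and the first factor is finite because
`2α > 1`.
Since `(1 + |t|) |f' t|` is bounded, the mean value theorem bounds the unit increment of `u`
at `x ≥ 0` and at `-x - 1` by `C / (n + x)`, so `∑ₓ (u (x + 1) - u x)² = O(1 / n)`.
Hence the quantity is `O(n ^ (2α - 2))`.
The sums are estimated in `ℝ≥0∞`, where reindexing and exchanging sums need no summability.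
-/

open Filter Finset Set
open scoped ENNReal

lemma tsum_le_of_tsum_ofReal_le {ι : Type*} {F : ι → ℝ} {M : ℝ} (hF : ∀ i, 0 ≤ F i)
    (hM : 0 ≤ M) (h : ∑' i, ENNReal.ofReal (F i) ≤ ENNReal.ofReal M) : ∑' i, F i ≤ M := by
  by_cases hs : Summable F
  · rwa [← ENNReal.ofReal_tsum_of_nonneg hF hs, ENNReal.ofReal_le_ofReal_iff hM] at h
  · rw [tsum_eq_zero_of_not_summable hs]
    exact hM

lemma sq_sub_le_mul_sum_sq_sub (u : ℕ → ℝ) (m : ℕ) :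
    (u m - u 0) ^ 2 ≤ m * ∑ j ∈ range m, (u (j + 1) - u j) ^ 2 := by
  rw [← Finset.sum_range_sub]
  simpa using sq_sum_le_card_mul_sum_sq (s := range m) (f := fun j => u (j + 1) - u j)

lemma tsum_ofReal_sq_sub_add_natCast_le (u : ℤ → ℝ) (m : ℕ) :
    ∑' x : ℤ, ENNReal.ofReal ((u (x + m) - u x) ^ 2)
      ≤ (m : ℝ≥0∞) ^ 2 * ∑' x : ℤ, ENNReal.ofReal ((u (x + 1) - u x) ^ 2) := by
  set E : ℤ → ℝ≥0∞ := fun x => ENNReal.ofReal ((u (x + 1) - u x) ^ 2)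
  calc ∑' x : ℤ, ENNReal.ofReal ((u (x + m) - u x) ^ 2)
      ≤ ∑' x : ℤ, (m : ℝ≥0∞) * ∑ j ∈ range m, E (x + j) := by
        refine ENNReal.tsum_le_tsum fun x => ?_
        rw [← ENNReal.ofReal_natCast, ← ENNReal.ofReal_sum_of_nonneg fun _ _ => sq_nonneg _,
          ← ENNReal.ofReal_mul (by positivity)]
        refine ENNReal.ofReal_le_ofReal ?_
        simpa [add_assoc] using sq_sub_le_mul_sum_sq_sub (fun j : ℕ => u (x + j)) m
    _ = (m : ℝ≥0∞) * ∑ j ∈ range m, ∑' x : ℤ, E (x + j) := by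
        rw [ENNReal.tsum_mul_left, Summable.tsum_finsetSum fun _ _ => ENNReal.summable]
    _ = (m : ℝ≥0∞) ^ 2 * ∑' x : ℤ, E x := by
        have hshift (j : ℕ) : ∑' x : ℤ, E (x + j) = ∑' x, E x :=
          (Equiv.addRight (j : ℤ)).tsum_eq E
        simp only [hshift, sum_const, card_range, nsmul_eq_mul, sq, mul_assoc]

lemma tsum_ofReal_sq_sub_add_le (u : ℤ → ℝ) (z : ℤ) :
    ∑' x : ℤ, ENNReal.ofReal ((u (x + z) - u x) ^ 2)
      ≤ ENNReal.ofReal ((z : ℝ) ^ 2) *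
        ∑' x : ℤ, ENNReal.ofReal ((u (x + 1) - u x) ^ 2) := by
  obtain ⟨m, rfl | rfl⟩ := Int.eq_nat_or_neg z
  · simpa [ENNReal.ofReal_pow] using tsum_ofReal_sq_sub_add_natCast_le u m
  · calc ∑' x : ℤ, ENNReal.ofReal ((u (x + -m) - u x) ^ 2)
        = ∑' x : ℤ, ENNReal.ofReal ((u (x + m) - u x) ^ 2) := by
          rw [← (Equiv.addRight (m : ℤ)).tsum_eq]
          refine tsum_congr fun x => ?_
          rw [Equiv.coe_addRight, add_neg_cancel_right, ← neg_sub, neg_sq]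
      _ ≤ _ := by simpa [ENNReal.ofReal_pow] using tsum_ofReal_sq_sub_add_natCast_le u m

lemma tsum_ofReal_sq_sub_div_rpow_le (u : ℤ → ℝ) (β : ℝ) :
    ∑' p : ℤ × ℤ, ENNReal.ofReal (if p.1 = p.2 then 0 else
        (u p.2 - u p.1) ^ 2 / |(p.2 : ℝ) - p.1| ^ (2 + β))
      ≤ (∑' z : ℤ, ENNReal.ofReal (|(z : ℝ)| ^ (-β))) *
        ∑' x : ℤ, ENNReal.ofReal ((u (x + 1) - u x) ^ 2) := by
  set E := ∑' x : ℤ, ENNReal.ofReal ((u (x + 1) - u x) ^ 2)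
  set T : ℤ × ℤ → ℝ≥0∞ := fun p => ENNReal.ofReal (if p.1 = p.2 then 0 else
    (u p.2 - u p.1) ^ 2 / |(p.2 : ℝ) - p.1| ^ (2 + β))
  have hreindex (x : ℤ) : ∑' y, T (x, y) = ∑' z, T (x, x + z) :=
    ((Equiv.addLeft x).tsum_eq fun y => T (x, y)).symm
  rw [ENNReal.tsum_prod', tsum_congr hreindex, ENNReal.tsum_comm, ← ENNReal.tsum_mul_right]
  refine ENNReal.tsum_le_tsum fun z => ?_
  rcases eq_or_ne z 0 with rfl | hz
  · simp [T]
  have hz' : 0 < |(z : ℝ)| := by positivity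
  calc ∑' x : ℤ, T (x, x + z)
      = (∑' x : ℤ, ENNReal.ofReal ((u (x + z) - u x) ^ 2)) /
          ENNReal.ofReal (|(z : ℝ)| ^ (2 + β)) := by
        simp only [T, left_eq_add, hz, if_false, Int.cast_add, add_sub_cancel_left,
          div_eq_mul_inv, ← ENNReal.tsum_mul_right]
        exact tsum_congr fun x => ENNReal.ofReal_div_of_pos (by positivity)
    _ ≤ ENNReal.ofReal ((z : ℝ) ^ 2) * E / ENNReal.ofReal (|(z : ℝ)| ^ (2 + β)) := by
        gcongr
        exact tsum_ofReal_sq_sub_add_le u z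
    _ = ENNReal.ofReal (|(z : ℝ)| ^ (-β)) * E := by
        rw [ENNReal.mul_div_right_comm, ← ENNReal.ofReal_div_of_pos (by positivity)]
        congr 2
        rw [Real.rpow_add hz', Real.rpow_neg hz'.le, ← sq_abs, Real.rpow_two]
        field_simp

lemma abs_sub_le_of_one_add_abs_mul_abs_deriv_le {f : ℝ → ℝ} {C a b m : ℝ}
    (hf : Differentiable ℝ f) (hC : ∀ t, (1 + |t|) * |deriv f t| ≤ C) (hm : 0 ≤ m)
    (hab : a ≤ b) (hmt : ∀ t ∈ Icc a b, m ≤ |t|) :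
    |f b - f a| ≤ C / (1 + m) * (b - a) := by
  have bound : ∀ t ∈ Icc a b, ‖deriv f t‖ ≤ C / (1 + m) := fun t ht => by
    rw [Real.norm_eq_abs, le_div_iff₀' (by positivity)]
    exact (mul_le_mul_of_nonneg_right (by linarith [hmt t ht]) (abs_nonneg _)).trans (hC t)
  simpa [abs_of_nonneg (sub_nonneg.2 hab)] using
    (convex_Icc a b).norm_image_sub_le_of_norm_deriv_le (fun t _ => hf t) bound
      (left_mem_Icc.2 hab) (right_mem_Icc.2 hab)

lemma sum_range_inv_add_sq_le (n M : ℕ) (hn : 0 < n) :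
    ∑ k ∈ range M, (((n + k : ℕ) : ℝ) ^ 2)⁻¹ ≤ 2 / n := by
  obtain ⟨n, rfl⟩ := Nat.exists_eq_add_one_of_ne_zero hn.ne'
  have h := sum_Ioo_inv_sq_le (α := ℝ) n (n + 1 + M)
  rw [← Finset.Ico_add_one_left_eq_Ioo, sum_Ico_eq_sum_range, Nat.add_sub_cancel_left] at h
  simpa using h

lemma tsum_ofReal_sq_le_of_abs_le_div_add {h : ℕ → ℝ} {C : ℝ} {n : ℕ} (hn : 0 < n)
    (hh : ∀ k : ℕ, |h k| ≤ C / (n + k)) :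
    ∑' k, ENNReal.ofReal (h k ^ 2) ≤ ENNReal.ofReal (2 * C ^ 2 / n) := by
  refine ENNReal.tsum_le_of_sum_range_le fun M => ?_
  rw [← ENNReal.ofReal_sum_of_nonneg fun _ _ => sq_nonneg _]
  refine ENNReal.ofReal_le_ofReal ?_
  calc ∑ k ∈ range M, h k ^ 2
      ≤ ∑ k ∈ range M, C ^ 2 * (((n + k : ℕ) : ℝ) ^ 2)⁻¹ := by
        refine sum_le_sum fun k _ => ?_
        rw [← sq_abs, ← inv_pow, ← mul_pow, ← div_eq_mul_inv, Nat.cast_add]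
        exact pow_le_pow_left₀ (abs_nonneg _) (hh k) 2
    _ ≤ C ^ 2 * (2 / n) := by
        rw [← mul_sum]
        exact mul_le_mul_of_nonneg_left (sum_range_inv_add_sq_le n M hn) (sq_nonneg C)
    _ = 2 * C ^ 2 / n := by ring

lemma tsum_ofReal_sq_sub_div_natCast_le {f : ℝ → ℝ} {C : ℝ} (hf : Differentiable ℝ f)
    (hC : ∀ t, (1 + |t|) * |deriv f t| ≤ C) {n : ℕ} (hn : 0 < n) :
    ∑' x : ℤ, ENNReal.ofReal ((f (((x + 1 : ℤ) : ℝ) / n) - f ((x : ℝ) / n)) ^ 2)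
      ≤ ENNReal.ofReal (4 * C ^ 2 / n) := by
  have hn' : (0 : ℝ) < n := by exact_mod_cast hn
  have hstep (k : ℕ) : C / (1 + k / n) * (1 / n) = C / (n + k) := by field_simp
  have hpos (k : ℕ) :
      |f ((((k : ℤ) + 1 : ℤ) : ℝ) / n) - f (((k : ℤ) : ℝ) / n)| ≤ C / (n + k) := by
    push_cast
    refine (abs_sub_le_of_one_add_abs_mul_abs_deriv_le hf hC (m := k / n) (by positivity)
      (by gcongr; linarith) fun t ht => ht.1.trans (le_abs_self t)).trans_eq ?_
    rw [← hstep, ← sub_div, add_sub_cancel_left]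
  have hneg (k : ℕ) :
      |f (((-((k : ℤ) + 1) + 1 : ℤ) : ℝ) / n) - f (((-((k : ℤ) + 1) : ℤ) : ℝ) / n)|
        ≤ C / (n + k) := by
    push_cast
    refine (abs_sub_le_of_one_add_abs_mul_abs_deriv_le hf hC (m := k / n) (by positivity)
      (by gcongr; linarith) fun t ht => ?_).trans_eq ?_
    · have h2 : (-((k : ℝ) + 1) + 1) / n = -(k / n) := by ring
      linarith [ht.2, neg_le_abs t]
    · rw [← hstep, ← sub_div]; ring_nf
  rw [tsum_of_nat_of_neg_add_one ENNReal.summable ENNReal.summable,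
    show 4 * C ^ 2 / n = 2 * C ^ 2 / n + 2 * C ^ 2 / n by ring,
    ENNReal.ofReal_add (by positivity) (by positivity)]
  exact add_le_add (tsum_ofReal_sq_le_of_abs_le_div_add hn hpos)
    (tsum_ofReal_sq_le_of_abs_le_div_add hn hneg)

lemma SchwartzMap.exists_one_add_abs_mul_abs_deriv_le (f : SchwartzMap ℝ ℝ) :
    ∃ C, ∀ t, (1 + |t|) * |deriv f t| ≤ C := by
  obtain ⟨C₀, -, hC₀⟩ := (SchwartzMap.derivCLM ℝ ℝ f).decay 0 0
  obtain ⟨C₁, -, hC₁⟩ := (SchwartzMap.derivCLM ℝ ℝ f).decay 1 0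
  refine ⟨C₀ + C₁, fun t => ?_⟩
  have h₀ := hC₀ t
  have h₁ := hC₁ t
  simp only [norm_iteratedFDeriv_zero, SchwartzMap.derivCLM_apply, Real.norm_eq_abs, pow_zero,
    pow_one, one_mul] at h₀ h₁
  linarith

lemma tsum_sq_sub_div_natCast_div_rpow_le {f : ℝ → ℝ} {C β : ℝ} (hf : Differentiable ℝ f)
    (hC : ∀ t, (1 + |t|) * |deriv f t| ≤ C) (hβ : 1 < β) {n : ℕ} (hn : 0 < n) :
    ∑' p : ℤ × ℤ, (if p.1 = p.2 then 0 else
        (f ((p.2 : ℝ) / n) - f ((p.1 : ℝ) / n)) ^ 2 / |(p.2 : ℝ) - p.1| ^ (2 + β))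
      ≤ (∑' z : ℤ, |(z : ℝ)| ^ (-β)) * (4 * C ^ 2 / n) := by
  have hZ := Real.summable_abs_int_rpow hβ
  refine tsum_le_of_tsum_ofReal_le (fun p => by split_ifs <;> positivity) (by positivity) ?_
  calc _ ≤ _ := tsum_ofReal_sq_sub_div_rpow_le (fun x => f (x / n)) β
    _ ≤ ENNReal.ofReal (∑' z : ℤ, |(z : ℝ)| ^ (-β)) * ENNReal.ofReal (4 * C ^ 2 / n) := by
        rw [ENNReal.ofReal_tsum_of_nonneg (fun z => by positivity) hZ]
        gcongr
        exact tsum_ofReal_sq_sub_div_natCast_le hf hC hn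
    _ = _ := (ENNReal.ofReal_mul (tsum_nonneg fun z => by positivity)).symm

theorem stmt_19_general (α : ℝ) (hα1 : 1 / 2 < α)
    (f : SchwartzMap ℝ ℝ)
    (S : ℕ → ℝ)
    (hS : ∀ n : ℕ, S n = (n : ℝ) ^ (2 * α - 1) *
      ∑' p : ℤ × ℤ, if p.1 = p.2 then 0 else
        (f ((p.2 : ℝ) / n) - f ((p.1 : ℝ) / n)) ^ 2 / |((p.2 : ℝ) - p.1)| ^ (2 + 2 * α)) :
    (α = 1 → ∃ C : ℝ, ∀ n : ℕ, 1 ≤ n → S n ≤ C) ∧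
    (α < 1 → Tendsto S atTop (nhds 0)) := by
  obtain ⟨C, hC⟩ := f.exists_one_add_abs_mul_abs_deriv_le
  set K := (∑' z : ℤ, |(z : ℝ)| ^ (-(2 * α))) * (4 * C ^ 2)
  have hS_le (n : ℕ) (hn : 1 ≤ n) : S n ≤ K * (n : ℝ) ^ (2 * α - 2) := by
    have hn' : (0 : ℝ) < n := by exact_mod_cast hn
    calc S n ≤ (n : ℝ) ^ (2 * α - 1) * (K / n) := by
          rw [hS n, mul_div_assoc]
          gcongr
          exact tsum_sq_sub_div_natCast_div_rpow_le f.differentiable hC (by linarith) hn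
      _ = K * (n : ℝ) ^ (2 * α - 2) := by
          rw [show 2 * α - 1 = 2 * α - 2 + 1 by ring, Real.rpow_add_one hn'.ne']
          field_simp
  have hS_nonneg (n : ℕ) : 0 ≤ S n := by
    rw [hS n]
    exact mul_nonneg (by positivity) (tsum_nonneg fun p => by split_ifs <;> positivity)
  refine ⟨fun hα => ⟨K, fun n hn => by simpa [hα] using hS_le n hn⟩, fun hα => ?_⟩
  have hpow : Tendsto (fun n : ℕ => K * (n : ℝ) ^ (2 * α - 2)) atTop (nhds 0) := by
    simpa using ((tendsto_rpow_neg_atTop (by linarith : 0 < 2 - 2 * α)).comp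
      tendsto_natCast_atTop_atTop).const_mul K
  exact squeeze_zero' (.of_forall hS_nonneg) (eventually_atTop.2 ⟨1, hS_le⟩) hpow

theorem stmt_19 (α : ℝ) (hα1 : 1 / 2 < α) (hα2 : α ≤ 1)
    (f : SchwartzMap ℝ ℝ)
    (S : ℕ → ℝ)
    (hS : ∀ n : ℕ, S n = (n : ℝ) ^ (2 * α - 1) *
      ∑' p : ℤ × ℤ, if p.1 = p.2 then 0 else
        (f ((p.2 : ℝ) / n) - f ((p.1 : ℝ) / n)) ^ 2 / |((p.2 : ℝ) - p.1)| ^ (2 + 2 * α)) :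
    (α = 1 → ∃ C : ℝ, ∀ n : ℕ, 1 ≤ n → S n ≤ C) ∧
    (α < 1 → Tendsto S atTop (nhds 0)) :=
  stmt_19_general α hα1 f S hS
end
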